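/- arXiv:2211.08605 — 2 statements merged into one kernel-verified Lean document; each statement's English description precedes it below -/
import Mathlib

section
/- For every finite simple graph H, every orbit ψ of H, every finite simple graph G, and every vertex v of G, the orbit homomorphism count satisfies the inclusion-exclusion formula OrbitHom_{H,ψ}(v) = Σ_{S ∈ IS(ψ)} (−1)^{|S|+1} · VertexHom_{H_S, h_S}(v). -/
open scoped Classical

/-- `ψ` is an orbit of the vertices of `H` under its automorphism group. -/
def IsOrbit {V : Type*} (H : SimpleGraph V) (ψ : Finset V) : Prop :=
  ∃ h : V, ∀ u : V, u ∈ ψ ↔ ∃ σ : H ≃g H, σ h = u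

/-- `IS(ψ)`: the nonempty subsets of `ψ` that are independent sets in `H`. -/
noncomputable def indepSubsets {V : Type*} (H : SimpleGraph V) (ψ : Finset V) :
    Finset (Finset V) :=
  ψ.powerset.filter fun S => S.Nonempty ∧ ∀ a ∈ S, ∀ b ∈ S, ¬ H.Adj a b

/-- `H_S`: the graph obtained from `H` by merging all vertices of `S` into the single
new vertex `none` (playing the role of `h_S`), removing duplicate edges. -/
def mergeGraph {V : Type*} (H : SimpleGraph V) (S : Finset V) :
    SimpleGraph (Option {x : V // x ∉ S}) where
  Adj a b :=
    match a, b with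
    | none, none => False
    | none, some y => ∃ s ∈ S, H.Adj s y.1
    | some x, none => ∃ s ∈ S, H.Adj s x.1
    | some x, some y => H.Adj x.1 y.1
  symm := by
    constructor
    rintro (_ | x) (_ | y) hab
    · exact hab
    · exact hab
    · exact hab
    · exact hab.symm
  loopless := by
    constructor
    rintro (_ | x) hab
    · exact hab
    · exact H.loopless.irrefl x.1 hab

/-- `VertexHom_{H,h}(v)`: the number of homomorphisms from `H` to `G` mapping `h` to `v`. -/
noncomputable def vertexHom {V W : Type*} (H : SimpleGraph V) (G : SimpleGraph W)
    (h : V) (v : W) : ℕ :=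
  Nat.card {φ : H →g G // φ h = v}

/-- `OrbitHom_{H,ψ}(v)`: the number of homomorphisms from `H` to `G` mapping some
vertex of the orbit `ψ` to `v`. -/
noncomputable def orbitHom {V W : Type*} (H : SimpleGraph V) (G : SimpleGraph W)
    (ψ : Finset V) (v : W) : ℕ :=
  Nat.card {φ : H →g G // ∃ h ∈ ψ, φ h = v}

/-- `Hom(H,G)`: the total number of homomorphisms from `H` to `G`. -/
noncomputable def homCount {V W : Type*} (H : SimpleGraph V) (G : SimpleGraph W) : ℕ :=
  Nat.card (H →g G)

/-- A walk is induced if any two adjacent vertices on it are joined by an edge of the walk. -/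
def IsInducedWalk {V : Type*} (H : SimpleGraph V) {u w : V} (p : H.Walk u w) : Prop :=
  ∀ a ∈ p.support, ∀ b ∈ p.support, H.Adj a b → s(a, b) ∈ p.edges

/-- `LICL(H)`: the length of the longest induced cycle of `H` (0 if there is none). -/
noncomputable def LICL {V : Type*} (H : SimpleGraph V) : ℕ :=
  sSup {n | ∃ (u : V) (c : H.Walk u u), c.IsCycle ∧ IsInducedWalk H c ∧ c.length = n}

/-- `LIPCO(H)`: the length of the longest induced simple path between two vertices
`h, h'` of the same orbit of `H`, where `h` may equal `h'`, forming an induced cycle. -/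
noncomputable def LIPCO {V : Type*} (H : SimpleGraph V) : ℕ :=
  sSup ({n | ∃ (h h' : V) (p : H.Walk h h'), h ≠ h' ∧ (∃ σ : H ≃g H, σ h = h') ∧
          p.IsPath ∧ IsInducedWalk H p ∧ p.length = n} ∪
        {n | ∃ (h : V) (c : H.Walk h h), c.IsCycle ∧ IsInducedWalk H c ∧ c.length = n})

/-- An orientation of a simple graph `G`: each edge receives exactly one direction. -/
structure GraphOrientation {V : Type*} (G : SimpleGraph V) where
  rel : V → V → Prop
  consistent : ∀ u v, G.Adj u v ↔ (rel u v ∨ rel v u)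
  antisymm : ∀ u v, rel u v → ¬ rel v u

/-- An orientation is acyclic if the resulting digraph has no directed cycle. -/
def GraphOrientation.IsAcyclic {V : Type*} {G : SimpleGraph V} (O : GraphOrientation G) : Prop :=
  ∀ v : V, ¬ Relation.TransGen O.rel v v

/-!
Counting the homomorphisms that send some vertex of `ψ` to `v` by inclusion-exclusion over the
nonempty `S ⊆ ψ` leaves the homomorphisms that are constant `v` on `S`. If `S` contains an edge
there are none, since `G` has no loops; if `S` is independent they are exactly the homomorphisms
from `H_S` sending `h_S` to `v`.
-/

open Finset

theorem natCard_exists_mem_eq_sum_powerset {ι α : Type*} [Finite α] (s : Finset ι)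
    (P : ι → α → Prop) :
    (Nat.card {x // ∃ i ∈ s, P i x} : ℤ) =
      ∑ t ∈ s.powerset with t.Nonempty, (-1) ^ (#t + 1) * (Nat.card {x // ∀ i ∈ t, P i x} : ℤ) := by
  have := Fintype.ofFinite α
  let A (i : ι) : Finset α := {x | P i x}
  have hunion : s.biUnion A = ({x | ∃ i ∈ s, P i x} : Finset α) := by
    ext; simp [A]
  have hinter (t : Finset ι) (ht : t.Nonempty) :
      t.inf' ht A = ({x | ∀ i ∈ t, P i x} : Finset α) := by
    ext; simp [A, inf'_eq_inf, mem_inf]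
  simp only [Nat.card_eq_fintype_card, Fintype.card_subtype]
  rw [← hunion, inclusion_exclusion_card_biUnion, ← sum_coe_sort (s.powerset.filter _)]
  exact Fintype.sum_congr _ _ fun t => by rw [hinter]

theorem mem_indepSubsets {V : Type*} {H : SimpleGraph V} {ψ S : Finset V} :
    S ∈ indepSubsets H ψ ↔ S ⊆ ψ ∧ S.Nonempty ∧ ∀ a ∈ S, ∀ b ∈ S, ¬ H.Adj a b := by
  rw [indepSubsets, mem_filter, mem_powerset]

section mergeGraph

variable {V W : Type*} {H : SimpleGraph V} {G : SimpleGraph W} {S : Finset V}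

noncomputable def homOfMergeGraph (hS : ∀ a ∈ S, ∀ b ∈ S, ¬ H.Adj a b)
    (φ : mergeGraph H S →g G) : H →g G where
  toFun a := if ha : a ∈ S then φ none else φ (some ⟨a, ha⟩)
  map_rel' {a b} hab := by
    by_cases ha : a ∈ S <;> by_cases hb : b ∈ S <;> simp only [ha, hb, dite_true, dite_false]
    · exact absurd hab (hS a ha b hb)
    · exact φ.map_rel (show (mergeGraph H S).Adj none (some ⟨b, hb⟩) from ⟨a, ha, hab⟩)
    · exact φ.map_rel (show (mergeGraph H S).Adj (some ⟨a, ha⟩) none from ⟨b, hb, hab.symm⟩)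
    · exact φ.map_rel hab

def mergeGraphHomOfEqOn (φ : H →g G) {v : W} (hφ : ∀ h ∈ S, φ h = v) :
    mergeGraph H S →g G where
  toFun o := o.elim v fun a => φ a.1
  map_rel' {o o'} hoo' := by
    match o, o', hoo' with
    | none, some b, ⟨s, hs, hsb⟩ => simpa [hφ s hs] using φ.map_rel hsb
    | some a, none, ⟨s, hs, hsa⟩ => simpa [hφ s hs] using (φ.map_rel hsa).symm
    | some a, some b, hab => exact φ.map_rel hab

theorem vertexHom_mergeGraph_none (hS : ∀ a ∈ S, ∀ b ∈ S, ¬ H.Adj a b) (v : W) :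
    vertexHom (mergeGraph H S) G none v = Nat.card {φ : H →g G // ∀ h ∈ S, φ h = v} :=
  Nat.card_congr
    { toFun φ := ⟨homOfMergeGraph hS φ.1, fun h hh => (dif_pos hh).trans φ.2⟩
      invFun φ := ⟨mergeGraphHomOfEqOn φ.1 φ.2, rfl⟩
      left_inv := fun ⟨φ, hφ⟩ => by
        ext (_ | ⟨a, ha⟩)
        exacts [hφ.symm, dif_neg ha]
      right_inv := fun ⟨φ, hφ⟩ => by
        ext a
        by_cases ha : a ∈ S
        · exact (dif_pos ha).trans (hφ a ha).symm
        · exact dif_neg ha }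

theorem natCard_hom_eqOn_eq_zero_of_adj {a b : V} (ha : a ∈ S) (hb : b ∈ S) (hab : H.Adj a b)
    (v : W) : Nat.card {φ : H →g G // ∀ h ∈ S, φ h = v} = 0 :=
  Nat.card_eq_zero.2 <| Or.inl ⟨fun ⟨φ, hφ⟩ => G.loopless.irrefl v <| by
    simpa [hφ a ha, hφ b hb] using φ.map_rel hab⟩

end mergeGraph

theorem orbitHom_eq_inclusion_exclusion_general {V W : Type*} [Fintype V] [Fintype W]
    (H : SimpleGraph V) (G : SimpleGraph W) (ψ : Finset V) (v : W) :
    (orbitHom H G ψ v : ℤ) =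
      ∑ S ∈ indepSubsets H ψ,
        (-1 : ℤ) ^ (S.card + 1) * (vertexHom (mergeGraph H S) G none v : ℤ) := by
  rw [orbitHom, natCard_exists_mem_eq_sum_powerset ψ fun h (φ : H →g G) => φ h = v]
  symm
  refine (sum_congr rfl fun S hS => ?_).trans (sum_subset (fun S hS => ?_) fun S hS hSi => ?_)
  · rw [vertexHom_mergeGraph_none (mem_indepSubsets.1 hS).2.2]
  · obtain ⟨hSψ, hSne, -⟩ := mem_indepSubsets.1 hS
    exact mem_filter.2 ⟨mem_powerset.2 hSψ, hSne⟩
  · obtain ⟨hSψ, hSne⟩ := mem_filter.1 hS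
    obtain ⟨a, ha, b, hb, hab⟩ : ∃ a ∈ S, ∃ b ∈ S, H.Adj a b := by
      simpa [mem_indepSubsets, mem_powerset.1 hSψ, hSne] using hSi
    rw [natCard_hom_eqOn_eq_zero_of_adj ha hb hab, Nat.cast_zero, mul_zero]

/-- inclusion-exclusion formula expressing orbit homomorphism counts in
terms of vertex-centric homomorphism counts of the merged graphs `H_S`. -/
theorem orbitHom_eq_inclusion_exclusion {V W : Type*} [Fintype V] [Fintype W]
    (H : SimpleGraph V) (G : SimpleGraph W) (ψ : Finset V) (hψ : IsOrbit H ψ) (v : W) :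
    (orbitHom H G ψ v : ℤ) =
      ∑ S ∈ indepSubsets H ψ,
        (-1 : ℤ) ^ (S.card + 1) * (vertexHom (mergeGraph H S) G none v : ℤ) :=
  orbitHom_eq_inclusion_exclusion_general H G ψ v
end

section
/- For every finite simple graph H, every orbit ψ of H, and every finite simple graph G, the aggregate orbit count satisfies Agg(H,G,ψ) := Σ_{v ∈ V(G)} OrbitHom_{H,ψ}(v) = Σ_{S ∈ IS(ψ)} (−1)^{|S|+1} · Hom(H_S, G). -/
open scoped Classical

/-!
Double counting over homomorphisms `φ : H →g G`. The left side counts each `φ` once for every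
vertex of `φ(ψ)`. Homomorphisms out of `H_S` are the homomorphisms out of `H` that are constant
on `S`, and the sets `S ⊆ ψ` on which `φ` is constant are exactly the nonempty subsets of the
fibres of `φ` on `ψ`; they are automatically independent since `G` has no loops. Each fibre `T`
contributes `∑_{∅ ≠ S ⊆ T} (-1)^(|S|+1) = 1`, so the right side also counts `|φ(ψ)|`
per `φ`.
-/

open Finset

section Merge

variable {V W : Type*} {H : SimpleGraph V} {G : SimpleGraph W} {S : Finset V}

noncomputable def mergeProj (hS : ∀ a ∈ S, ∀ b ∈ S, ¬ H.Adj a b) :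
    H →g mergeGraph H S where
  toFun x := if h : x ∈ S then none else some ⟨x, h⟩
  map_rel' {u v} huv := by
    by_cases hu : u ∈ S <;> by_cases hv : v ∈ S
    · exact absurd huv (hS u hu v hv)
    · simpa [hu, hv, mergeGraph] using ⟨u, hu, huv⟩
    · simpa [hu, hv, mergeGraph] using ⟨v, hv, huv.symm⟩
    · simpa [hu, hv, mergeGraph] using huv

lemma mergeProj_of_mem (hS : ∀ a ∈ S, ∀ b ∈ S, ¬ H.Adj a b) {x : V} (hx : x ∈ S) :
    mergeProj hS x = none :=
  dif_pos hx

def mergeLift (φ : H →g G) {c : W} (hφ : ∀ a ∈ S, φ a = c) : mergeGraph H S →g G where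
  toFun
    | none => c
    | some y => φ y
  map_rel' {x y} hxy := by
    match x, y, hxy with
    | none, some y, ⟨s, hs, hadj⟩ => simpa [← hφ s hs] using φ.map_rel hadj
    | some x, none, ⟨s, hs, hadj⟩ => simpa [← hφ s hs] using (φ.map_rel hadj).symm
    | some x, some y, hxy => exact φ.map_rel hxy

noncomputable def mergeGraphHomEquiv (hS : ∀ a ∈ S, ∀ b ∈ S, ¬ H.Adj a b) {s₀ : V}
    (hs₀ : s₀ ∈ S) :
    (mergeGraph H S →g G) ≃ {φ : H →g G // ∀ a ∈ S, ∀ b ∈ S, φ a = φ b} where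
  toFun ρ := ⟨ρ.comp (mergeProj hS), fun a ha b hb => by
    simp [mergeProj_of_mem hS ha, mergeProj_of_mem hS hb]⟩
  invFun φ := mergeLift φ.1 fun a ha => φ.2 a ha s₀ hs₀
  left_inv ρ := by
    ext (_ | y)
    · simp [mergeLift, mergeProj_of_mem hS hs₀]
    · simp [mergeLift, mergeProj, y.2]
  right_inv φ := by
    ext x
    by_cases hx : x ∈ S
    · simp [mergeLift, mergeProj, hx, φ.2 s₀ hs₀ x hx]
    · simp [mergeLift, mergeProj, hx]

lemma homCount_mergeGraph [Fintype (H →g G)] (hne : S.Nonempty)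
    (hS : ∀ a ∈ S, ∀ b ∈ S, ¬ H.Adj a b) :
    homCount (mergeGraph H S) G = #{φ : H →g G | ∀ a ∈ S, ∀ b ∈ S, φ a = φ b} := by
  rw [homCount, Nat.card_congr (mergeGraphHomEquiv hS hne.choose_spec),
    Nat.card_eq_fintype_card, Fintype.card_subtype]

end Merge

section Alternating

variable {α β : Type*}

lemma sum_powerset_nonempty_neg_one_pow {T : Finset α} (hT : T.Nonempty) :
    ∑ S ∈ T.powerset with S.Nonempty, (-1 : ℤ) ^ (S.card + 1) = 1 := by
  have h := sum_powerset_neg_one_pow_card_of_nonempty hT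
  rw [← sum_filter_add_sum_filter_not _ Finset.Nonempty] at h
  simp_rw [pow_succ, ← sum_mul]
  simp only [not_nonempty_iff_eq_empty, filter_eq', mem_powerset, empty_subset, ↓reduceIte,
    sum_singleton, card_empty, pow_zero] at h
  linarith

lemma sum_powerset_constOn_neg_one_pow_eq_card_image (f : α → β) (ψ : Finset α) :
    ∑ S ∈ ψ.powerset with S.Nonempty ∧ ∀ a ∈ S, ∀ b ∈ S, f a = f b,
      (-1 : ℤ) ^ (S.card + 1) = #(ψ.image f) := by
  have hfib : {S ∈ ψ.powerset | S.Nonempty ∧ ∀ a ∈ S, ∀ b ∈ S, f a = f b} =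
      (ψ.image f).biUnion fun c => {S ∈ {x ∈ ψ | f x = c}.powerset | S.Nonempty} := by
    ext S
    simp only [mem_filter, mem_powerset, mem_biUnion, mem_image, subset_iff]
    constructor
    · rintro ⟨hsub, ⟨x, hx⟩, hconst⟩
      exact ⟨f x, ⟨x, hsub hx, rfl⟩, fun a ha => ⟨hsub ha, hconst a ha x hx⟩, x, hx⟩
    · rintro ⟨c, -, hsub, hne⟩
      exact ⟨fun a ha => (hsub ha).1, hne, fun a ha b hb => (hsub ha).2.trans (hsub hb).2.symm⟩
  have hdisj : (ψ.image f : Set β).PairwiseDisjoint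
      fun c => {S ∈ {x ∈ ψ | f x = c}.powerset | S.Nonempty} := by
    intro c _ d _ hcd
    refine disjoint_left.mpr fun S hSc hSd => ?_
    simp only [mem_filter, mem_powerset, subset_iff] at hSc hSd
    obtain ⟨x, hx⟩ := hSc.2
    exact hcd ((hSc.1 hx).2.symm.trans (hSd.1 hx).2)
  rw [hfib, sum_biUnion hdisj, card_eq_sum_ones, Nat.cast_sum]
  refine sum_congr rfl fun c hc => ?_
  obtain ⟨x, hx, rfl⟩ := mem_image.mp hc
  exact sum_powerset_nonempty_neg_one_pow ⟨x, mem_filter.mpr ⟨hx, rfl⟩⟩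

end Alternating

section Counting

variable {V W : Type*} {H : SimpleGraph V} {G : SimpleGraph W}

lemma filter_indepSubsets_constOn (φ : H →g G) (ψ : Finset V) :
    {S ∈ indepSubsets H ψ | ∀ a ∈ S, ∀ b ∈ S, φ a = φ b} =
      {S ∈ ψ.powerset | S.Nonempty ∧ ∀ a ∈ S, ∀ b ∈ S, φ a = φ b} := by
  ext S
  simp only [indepSubsets, mem_filter, mem_powerset]
  refine ⟨fun ⟨⟨hsub, hne, _⟩, hconst⟩ => ⟨hsub, hne, hconst⟩,
    fun ⟨hsub, hne, hconst⟩ => ⟨⟨hsub, hne, fun a ha b hb hab => ?_⟩, hconst⟩⟩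
  exact G.loopless.irrefl _ (hconst a ha b hb ▸ φ.map_rel hab)

lemma sum_indepSubsets_constOn_neg_one_pow_eq_card_image (φ : H →g G) (ψ : Finset V) :
    ∑ S ∈ indepSubsets H ψ,
        (-1 : ℤ) ^ (S.card + 1) * (if ∀ a ∈ S, ∀ b ∈ S, φ a = φ b then 1 else 0) =
      #(ψ.image φ) := by
  rw [← sum_powerset_constOn_neg_one_pow_eq_card_image φ ψ, ← filter_indepSubsets_constOn,
    sum_filter]
  simp only [mul_boole]
  -- the two sides differ only in their `Decidable` instances
  congr!

lemma sum_orbitHom_eq_sum_card_image [Fintype W] (H : SimpleGraph V) (G : SimpleGraph W)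
    [Fintype (H →g G)] (ψ : Finset V) :
    ∑ v, orbitHom H G ψ v = ∑ φ : H →g G, #(ψ.image φ) := by
  have h (v : W) : orbitHom H G ψ v = ∑ φ : H →g G, if v ∈ ψ.image φ then 1 else 0 := by
    rw [orbitHom, Nat.card_eq_fintype_card, Fintype.card_subtype, card_filter]
    simp [eq_comm]
  simp_rw [h]
  rw [sum_comm]
  simp only [sum_boole, filter_mem_eq_inter, univ_inter, Nat.cast_id]

end Counting

theorem agg_eq_signed_sum_homCounts_general {V W : Type*} [Fintype V] [Fintype W]
    (H : SimpleGraph V) (G : SimpleGraph W) (ψ : Finset V) :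
    (∑ v : W, (orbitHom H G ψ v : ℤ)) =
      ∑ S ∈ indepSubsets H ψ,
        (-1 : ℤ) ^ (S.card + 1) * (homCount (mergeGraph H S) G : ℤ) := by
  have := Fintype.ofFinite (H →g G)
  calc (∑ v : W, (orbitHom H G ψ v : ℤ))
      = ∑ φ : H →g G, (#(ψ.image φ) : ℤ) := by
        exact_mod_cast sum_orbitHom_eq_sum_card_image H G ψ
    _ = _ := by
        simp only [← sum_indepSubsets_constOn_neg_one_pow_eq_card_image, sum_comm (s := univ)]
        refine sum_congr rfl fun S hS => ?_
        simp only [indepSubsets, mem_filter] at hS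
        obtain ⟨-, hne, hind⟩ := hS
        rw [← mul_sum, homCount_mergeGraph hne hind, natCast_card_filter]

/-- the aggregate orbit count `Agg(H,G,ψ) = Σ_v OrbitHom_{H,ψ}(v)` is the
signed sum of the total homomorphism counts of the merged patterns `H_S`. -/
theorem agg_eq_signed_sum_homCounts {V W : Type*} [Fintype V] [Fintype W]
    (H : SimpleGraph V) (G : SimpleGraph W) (ψ : Finset V) (hψ : IsOrbit H ψ) :
    (∑ v : W, (orbitHom H G ψ v : ℤ)) =
      ∑ S ∈ indepSubsets H ψ,
        (-1 : ℤ) ^ (S.card + 1) * (homCount (mergeGraph H S) G : ℤ) :=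
  agg_eq_signed_sum_homCounts_general H G ψ
end
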